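/- Let ε > 0. There exists a constant C > 0 such that for every x₀ ∈ ℝ and every pair of smooth real-valued functions w, v on ℝ², 2π-periodic in the second variable y, rapidly decaying in x together with all their partial derivatives, and satisfying ∂_x v = ∂_y w, one has (∫₀^{2π}∫_ℝ χ_ε'(x+x₀)²·w(x,y)⁴ dx dy)^{1/2} ≤ C·∫₀^{2π}∫_ℝ ((∂_x w)² + v² + w²)(x,y)·χ_ε'(x+x₀) dx dy. -/

import Mathlib

open MeasureTheory Real

/-- The weight function `χ_ε(x) = (1 + tanh(εx))/2`. -/
noncomputable def chiW (ε x : ℝ) : ℝ := (1 + Real.tanh (ε * x)) / 2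

/-- A pair `(w, v)` of smooth real-valued functions on `ℝ²`, `2π`-periodic in the second
variable `y`, rapidly decaying in `x` together with all their partial derivatives,
with `v` representing `∂_x⁻¹ ∂_y w` (i.e. `∂_x v = ∂_y w`). -/
structure PeriodicEPair (w v : ℝ → ℝ → ℝ) : Prop where
  smooth_w : ContDiff ℝ (⊤ : ℕ∞) (fun p : ℝ × ℝ => w p.1 p.2)
  smooth_v : ContDiff ℝ (⊤ : ℕ∞) (fun p : ℝ × ℝ => v p.1 p.2)
  periodic_w : ∀ x y, w x (y + 2 * π) = w x y
  periodic_v : ∀ x y, v x (y + 2 * π) = v x y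
  decay_w : ∀ n m : ℕ, ∃ C : ℝ, ∀ x y : ℝ,
    ‖iteratedFDeriv ℝ n (fun p : ℝ × ℝ => w p.1 p.2) (x, y)‖ ≤ C / (1 + |x|) ^ m
  decay_v : ∀ n m : ℕ, ∃ C : ℝ, ∀ x y : ℝ,
    ‖iteratedFDeriv ℝ n (fun p : ℝ × ℝ => v p.1 p.2) (x, y)‖ ≤ C / (1 + |x|) ^ m
  compat : ∀ x y, deriv (fun x' => v x' y) x = deriv (fun y' => w x y') y

open Set Filter Topology

namespace WQE

noncomputable def phiF (ε t : ℝ) : ℝ :=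
  2 * ε * Real.exp (-(2 * (ε * t))) / (1 + Real.exp (-(2 * (ε * t)))) ^ 2

lemma chiW_eq (ε x : ℝ) : chiW ε x = (1 + Real.exp (-(2 * (ε * x))))⁻¹ := by
  have h1 : Real.exp (ε * x) + Real.exp (-(ε * x)) > 0 := by positivity
  have h2 : 1 + Real.exp (-(2 * (ε * x))) > 0 := by positivity
  have hm : Real.exp (-(ε*x)) * Real.exp (ε*x) = 1 := by
    rw [← Real.exp_add]; simp
  have hm2 : Real.exp (-(2*(ε*x))) = Real.exp (-(ε*x)) * Real.exp (-(ε*x)) := by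
    rw [← Real.exp_add]; ring_nf
  rw [chiW, Real.tanh_eq_sinh_div_cosh, Real.sinh_eq, Real.cosh_eq, hm2]
  field_simp
  nlinarith [hm, hm2, Real.exp_pos (ε*x), Real.exp_pos (-(ε*x))]

lemma hasDerivAt_chiW (ε t : ℝ) : HasDerivAt (chiW ε) (phiF ε t) t := by
  have hs : HasDerivAt (fun t : ℝ => Real.exp (-(2 * (ε * t))))
      (-(2*ε) * Real.exp (-(2 * (ε * t)))) t := by
    have h1 : HasDerivAt (fun t : ℝ => -(2 * (ε * t))) (-(2*ε)) t := by
      simpa [mul_assoc] using ((hasDerivAt_id t).const_mul (-(2*ε)))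
    simpa [mul_comm, Function.comp_def] using (Real.hasDerivAt_exp _).comp t h1
  have h2 : (1 + Real.exp (-(2 * (ε * t)))) ≠ 0 := by positivity
  have h3 : HasDerivAt (fun t : ℝ => (1 + Real.exp (-(2 * (ε * t))))⁻¹)
      (-(-(2*ε) * Real.exp (-(2 * (ε * t)))) / (1 + Real.exp (-(2 * (ε * t)))) ^ 2) t := by
    simpa [Pi.add_def, Pi.inv_def] using ((hasDerivAt_const t (1:ℝ)).add hs).inv h2
  have : HasDerivAt (chiW ε)
      (-(-(2*ε) * Real.exp (-(2 * (ε * t)))) / (1 + Real.exp (-(2 * (ε * t)))) ^ 2) t := by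
    refine HasDerivAt.congr_of_eventuallyEq h3 ?_
    filter_upwards with x using (chiW_eq ε x)
  convert this using 1
  rw [phiF]; ring

lemma deriv_chiW (ε t : ℝ) : deriv (chiW ε) t = phiF ε t := (hasDerivAt_chiW ε t).deriv

lemma phiF_pos {ε : ℝ} (hε : 0 < ε) (t : ℝ) : 0 < phiF ε t := by
  rw [phiF]; positivity

lemma phiF_le {ε : ℝ} (hε : 0 < ε) (t : ℝ) : phiF ε t ≤ ε / 2 := by
  rw [phiF]
  set s := Real.exp (-(2 * (ε * t))) with hs
  have hspos : 0 < s := Real.exp_pos _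
  rw [div_le_div_iff₀ (by positivity) (by norm_num)]
  nlinarith [sq_nonneg (1 - s)]

noncomputable def phiD (ε t : ℝ) : ℝ :=
  4 * ε ^ 2 * Real.exp (-(2 * (ε * t))) * (Real.exp (-(2 * (ε * t))) - 1)
    / (1 + Real.exp (-(2 * (ε * t)))) ^ 3

lemma hasDerivAt_phiF (ε t : ℝ) : HasDerivAt (phiF ε) (phiD ε t) t := by
  have hs : HasDerivAt (fun t : ℝ => Real.exp (-(2 * (ε * t))))
      (-(2*ε) * Real.exp (-(2 * (ε * t)))) t := by
    have h1 : HasDerivAt (fun t : ℝ => -(2 * (ε * t))) (-(2*ε)) t := by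
      simpa [mul_assoc] using ((hasDerivAt_id t).const_mul (-(2*ε)))
    simpa [mul_comm, Function.comp_def] using (Real.hasDerivAt_exp _).comp t h1
  set s := Real.exp (-(2 * (ε * t))) with hsdef
  have hspos : 0 < s := Real.exp_pos _
  have hnum : HasDerivAt (fun t : ℝ => 2 * ε * Real.exp (-(2 * (ε * t))))
      (2 * ε * (-(2*ε) * s)) t := hs.const_mul _
  have hden : HasDerivAt (fun t : ℝ => (1 + Real.exp (-(2 * (ε * t)))) ^ 2)
      (2 * (1 + s) ^ 1 * (-(2*ε) * s)) t := by
    have := ((hasDerivAt_const t (1:ℝ)).add hs).pow 2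
    norm_num at this
    refine this.congr_deriv ?_
    ring
  have hden0 : (1 + s) ^ 2 ≠ 0 := by positivity
  have := hnum.div hden hden0
  refine this.congr_deriv ?_
  rw [phiD, hsdef]
  field_simp
  ring


lemma abs_phiD_le {ε : ℝ} (hε : 0 < ε) (t : ℝ) :
    |4 * ε ^ 2 * Real.exp (-(2 * (ε * t))) * (Real.exp (-(2 * (ε * t))) - 1)
      / (1 + Real.exp (-(2 * (ε * t)))) ^ 3|
    ≤ 2 * ε * (2 * ε * Real.exp (-(2 * (ε * t))) / (1 + Real.exp (-(2 * (ε * t)))) ^ 2) := by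
  set s := Real.exp (-(2 * (ε * t))) with hs
  have hspos : 0 < s := Real.exp_pos _
  rw [abs_div, abs_of_pos (show (0:ℝ) < (1+s)^3 by positivity),
    div_le_iff₀ (show (0:ℝ) < (1+s)^3 by positivity)]
  have h1 : |4 * ε ^ 2 * s * (s - 1)| = 4 * ε^2 * s * |s - 1| := by
    rw [abs_mul]
    rw [abs_of_pos (show (0:ℝ) < 4 * ε^2 * s by positivity)]
  rw [h1]
  have h2 : |s - 1| ≤ 1 + s := by
    rw [abs_le]; constructor <;> nlinarith
  have h3 : 2 * ε * (2 * ε * s / (1 + s) ^ 2) * (1+s)^3 = 4 * ε^2 * s * (1 + s) := by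
    field_simp; ring
  rw [h3]
  nlinarith [sq_nonneg ε, mul_pos (mul_pos (show (0:ℝ) < 4*ε^2 by positivity) hspos) hspos]

/-- master integrability lemma -/
lemma integrable_of_decay {f : ℝ → ℝ} (hf : Continuous f) {c : ℝ}
    (h : ∀ x, |f x| ≤ c / (1 + |x|) ^ 2) : Integrable f := by
  have hc : 0 ≤ c := by
    have := (abs_nonneg (f 0)).trans (h 0)
    simpa using this
  refine Integrable.mono' (integrable_inv_one_add_sq.const_mul c)
    hf.aestronglyMeasurable (ae_of_all _ fun x => ?_)
  have h1 : (1:ℝ) + x^2 ≤ (1 + |x|)^2 := by nlinarith [abs_nonneg x, sq_abs x]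
  have h2 : c / (1 + |x|)^2 ≤ c * (1 + x^2)⁻¹ := by
    rw [div_eq_mul_inv]
    exact mul_le_mul_of_nonneg_left (by
      apply inv_anti₀ (by positivity) h1) hc
  exact (Real.norm_eq_abs _ ▸ (h x)).trans h2

lemma tendsto_decay_atBot {c : ℝ} :
    Tendsto (fun x : ℝ => c / (1 + |x|) ^ 2) atBot (𝓝 0) := by
  apply Tendsto.div_atTop tendsto_const_nhds
  apply Tendsto.comp (tendsto_pow_atTop (n := 2) (by norm_num))
  exact tendsto_atTop_add_const_left _ _ (tendsto_abs_atBot_atTop)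

lemma tendsto_decay_atTop {c : ℝ} :
    Tendsto (fun x : ℝ => c / (1 + |x|) ^ 2) atTop (𝓝 0) := by
  apply Tendsto.div_atTop tendsto_const_nhds
  apply Tendsto.comp (tendsto_pow_atTop (n := 2) (by norm_num))
  exact tendsto_atTop_add_const_left _ _ (tendsto_abs_atTop_atTop)

/-- partial derivative in first variable -/
lemma hasDerivAt_fst {F : ℝ × ℝ → ℝ} (hF : ContDiff ℝ (⊤ : ℕ∞) F) (x y : ℝ) :
    HasDerivAt (fun x' => F (x', y)) (fderiv ℝ F (x, y) (1, 0)) x := by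
  have h1 : HasDerivAt (fun x' : ℝ => (x', y)) ((1:ℝ), (0:ℝ)) x :=
    (hasDerivAt_id x).prodMk (hasDerivAt_const x y)
  exact (hF.differentiable (by simp) (x, y)).hasFDerivAt.comp_hasDerivAt x h1

lemma hasDerivAt_snd {F : ℝ × ℝ → ℝ} (hF : ContDiff ℝ (⊤ : ℕ∞) F) (x y : ℝ) :
    HasDerivAt (fun y' => F (x, y')) (fderiv ℝ F (x, y) (0, 1)) y := by
  have h1 : HasDerivAt (fun y' : ℝ => (x, y')) ((0:ℝ), (1:ℝ)) y :=
    (hasDerivAt_const y x).prodMk (hasDerivAt_id y)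
  exact (hF.differentiable (by simp) (x, y)).hasFDerivAt.comp_hasDerivAt y h1

lemma norm_fderiv_apply_le {F : ℝ × ℝ → ℝ} (p : ℝ × ℝ) (u : ℝ × ℝ) (hu : ‖u‖ ≤ 1) :
    ‖fderiv ℝ F p u‖ ≤ ‖iteratedFDeriv ℝ 1 F p‖ := by
  have h1 : ‖fderiv ℝ F p u‖ ≤ ‖fderiv ℝ F p‖ * ‖u‖ := (fderiv ℝ F p).le_opNorm u
  have h2 : ‖fderiv ℝ F p‖ = ‖iteratedFDeriv ℝ 1 F p‖ := by
    rw [← norm_iteratedFDeriv_fderiv (n := 0), norm_iteratedFDeriv_zero]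
  calc ‖fderiv ℝ F p u‖ ≤ ‖fderiv ℝ F p‖ * ‖u‖ := h1
    _ ≤ ‖fderiv ℝ F p‖ * 1 := by
        exact mul_le_mul_of_nonneg_left hu (norm_nonneg _)
    _ = ‖iteratedFDeriv ℝ 1 F p‖ := by rw [mul_one, h2]

lemma norm_one_zero : ‖((1:ℝ), (0:ℝ))‖ ≤ 1 := by
  rw [Prod.norm_def]; simp

lemma norm_zero_one : ‖((0:ℝ), (1:ℝ))‖ ≤ 1 := by
  rw [Prod.norm_def]; simp

lemma continuous_fderiv_apply {F : ℝ × ℝ → ℝ} (hF : ContDiff ℝ (⊤ : ℕ∞) F) (u : ℝ × ℝ) :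
    Continuous (fun p => fderiv ℝ F p u) :=
  (hF.continuous_fderiv (by simp)).clm_apply continuous_const

lemma continuous_phiF (ε x₀ : ℝ) : Continuous (fun x => phiF ε (x + x₀)) := by
  unfold phiF
  apply Continuous.div
  · fun_prop
  · fun_prop
  · intro x; positivity

lemma continuous_phiD (ε x₀ : ℝ) : Continuous (fun x => phiD ε (x + x₀)) := by
  unfold phiD
  apply Continuous.div
  · fun_prop
  · fun_prop
  · intro x; positivity

lemma hasDerivAt_phiF_shift (ε x₀ x : ℝ) :
    HasDerivAt (fun x => phiF ε (x + x₀)) (phiD ε (x + x₀)) x := by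
  simpa [Function.comp_def] using (hasDerivAt_phiF ε (x + x₀)).comp x ((hasDerivAt_id x).add_const x₀)

lemma abs_phiD_le' {ε : ℝ} (hε : 0 < ε) (t : ℝ) : |phiD ε t| ≤ 2 * ε * phiF ε t := by
  rw [phiD, phiF]; exact abs_phiD_le hε t

lemma abs_phiF_le {ε : ℝ} (hε : 0 < ε) (t : ℝ) : |phiF ε t| ≤ ε / 2 := by
  rw [abs_of_pos (phiF_pos hε t)]; exact phiF_le hε t

lemma abs_phiD_le'' {ε : ℝ} (hε : 0 < ε) (t : ℝ) : |phiD ε t| ≤ ε ^ 2 := by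
  refine (abs_phiD_le' hε t).trans ?_
  have := phiF_le hε t
  nlinarith [phiF_pos hε t]

lemma mul_abs_le {a b A B : ℝ} (ha : |a| ≤ A) (hb : |b| ≤ B) : |a * b| ≤ A * B := by
  rw [abs_mul]
  exact mul_le_mul ha hb (abs_nonneg _) ((abs_nonneg _).trans ha)


/-- The sup-in-x bound obtained from the fundamental theorem of calculus on `(-∞, x]`. -/
lemma sup_bound {ε x₀ : ℝ} (hε : 0 < ε) {f f' : ℝ → ℝ} {a0 a2 a10 a12 : ℝ}
    (hd : ∀ x, HasDerivAt f (f' x) x) (hfc : Continuous f) (hf'c : Continuous f')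
    (hf0 : ∀ x, |f x| ≤ a0) (hf2 : ∀ x, |f x| ≤ a2 / (1 + |x|) ^ 2)
    (hf'0 : ∀ x, |f' x| ≤ a10) (hf'2 : ∀ x, |f' x| ≤ a12 / (1 + |x|) ^ 2) (x : ℝ) :
    phiF ε (x + x₀) * f x ^ 2
      ≤ (1 + 2 * ε) * ∫ t : ℝ, (f' t ^ 2 + f t ^ 2) * phiF ε (t + x₀) := by
  have ha0 : 0 ≤ a0 := (abs_nonneg _).trans (hf0 0)
  have ha2 : 0 ≤ a2 := by have := (abs_nonneg (f 0)).trans (hf2 0); simpa using this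
  have ha10 : 0 ≤ a10 := (abs_nonneg _).trans (hf'0 0)
  have ha12 : 0 ≤ a12 := by have := (abs_nonneg (f' 0)).trans (hf'2 0); simpa using this
  set φ : ℝ → ℝ := fun t => phiF ε (t + x₀) with hφ
  have hφc : Continuous φ := continuous_phiF ε x₀
  have hφpos : ∀ t, 0 < φ t := fun t => phiF_pos hε (t + x₀)
  set D : ℝ → ℝ := fun t => phiD ε (t + x₀) * f t ^ 2 + φ t * (2 * f t * f' t) with hDdef
  have hDd : ∀ t, HasDerivAt (fun s => φ s * f s ^ 2) (D t) t := by
    intro t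
    have h1 := (hasDerivAt_phiF_shift ε x₀ t).mul ((hd t).pow 2)
    refine h1.congr_deriv ?_
    simp only [hDdef, hφ, Pi.pow_apply]
    push_cast
    ring
  have hDc : Continuous D := by
    apply Continuous.add
    · exact (continuous_phiD ε x₀).mul (hfc.pow 2)
    · exact hφc.mul ((continuous_const.mul hfc).mul hf'c)
  have hDb : ∀ t, |D t| ≤ (ε ^ 2 * (a0 * a2) + ε / 2 * (2 * a0 * a12)) / (1 + |t|) ^ 2 := by
    intro t
    refine (abs_add_le _ _).trans ?_
    have h1 : |phiD ε (t + x₀) * f t ^ 2| ≤ ε ^ 2 * (a0 * (a2 / (1 + |t|) ^ 2)) := by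
      rw [pow_two]
      exact mul_abs_le (abs_phiD_le'' hε _) (mul_abs_le (hf0 t) (hf2 t))
    have h2 : |φ t * (2 * f t * f' t)| ≤ ε / 2 * (2 * a0 * (a12 / (1 + |t|) ^ 2)) := by
      refine mul_abs_le (abs_phiF_le hε _) ?_
      have : |2 * f t| ≤ 2 * a0 := by
        rw [abs_mul]; simpa using mul_le_mul_of_nonneg_left (hf0 t) (by norm_num : (0:ℝ) ≤ 2)
      exact mul_abs_le this (hf'2 t)
    exact (add_le_add h1 h2).trans (le_of_eq (by ring))
  have intD : Integrable D := integrable_of_decay hDc hDb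
  have intQ : Integrable (fun t => (f' t ^ 2 + f t ^ 2) * φ t) := by
    refine integrable_of_decay (((hf'c.pow 2).add (hfc.pow 2)).mul hφc)
      (c := (a10 * a12 + a0 * a2) * (ε / 2)) fun t => ?_
    have h1 : |(f' t ^ 2 + f t ^ 2)| ≤ a10 * (a12 / (1 + |t|) ^ 2) + a0 * (a2 / (1 + |t|) ^ 2) := by
      refine (abs_add_le _ _).trans (add_le_add ?_ ?_)
      · rw [pow_two]; exact mul_abs_le (hf'0 t) (hf'2 t)
      · rw [pow_two]; exact mul_abs_le (hf0 t) (hf2 t)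
    exact (mul_abs_le h1 (abs_phiF_le hε _)).trans (le_of_eq (by ring))
  have htend : Tendsto (fun t => φ t * f t ^ 2) atBot (𝓝 0) := by
    rw [tendsto_zero_iff_norm_tendsto_zero]
    refine squeeze_zero (fun t => norm_nonneg _) (g := fun t => ε / 2 * (a0 * a2) / (1 + |t|) ^ 2)
      (fun t => ?_) tendsto_decay_atBot
    rw [Real.norm_eq_abs, pow_two]
    exact (mul_abs_le (abs_phiF_le hε _) (mul_abs_le (hf0 t) (hf2 t))).trans (le_of_eq (by ring))
  have hFTC : φ x * f x ^ 2 = ∫ t in Iic x, D t := by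
    rw [integral_Iic_of_hasDerivAt_of_tendsto' (fun t _ => hDd t) intD.integrableOn htend,
      sub_zero]
  calc φ x * f x ^ 2 = ∫ t in Iic x, D t := hFTC
    _ ≤ ∫ t in Iic x, |D t| :=
        integral_mono intD.integrableOn intD.abs.integrableOn fun t => le_abs_self _
    _ ≤ ∫ t, |D t| := setIntegral_le_integral intD.abs (ae_of_all _ fun t => abs_nonneg _)
    _ ≤ ∫ t, (1 + 2 * ε) * ((f' t ^ 2 + f t ^ 2) * φ t) := by
        refine integral_mono intD.abs (intQ.const_mul _) fun t => ?_
        have h1 : |D t| ≤ |phiD ε (t + x₀)| * f t ^ 2 + φ t * (2 * |f t| * |f' t|) := by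
          refine (abs_add_le _ _).trans (add_le_add ?_ ?_)
          · rw [abs_mul, abs_pow, sq_abs]
          · rw [abs_mul, abs_of_pos (hφpos t), abs_mul, abs_mul, abs_two]
        have h2 : |phiD ε (t + x₀)| ≤ 2 * ε * φ t := abs_phiD_le' hε _
        have h3 : 2 * |f t| * |f' t| ≤ f t ^ 2 + f' t ^ 2 := by
          nlinarith [sq_nonneg (|f t| - |f' t|), sq_abs (f t), sq_abs (f' t)]
        have h4 : 0 < φ t := hφpos t
        nlinarith [sq_nonneg (f t), sq_nonneg (f' t), mul_le_mul_of_nonneg_left h3 h4.le,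
          mul_le_mul_of_nonneg_right h2 (sq_nonneg (f t)),
          mul_nonneg (mul_nonneg hε.le h4.le) (sq_nonneg (f' t))]
    _ = (1 + 2 * ε) * ∫ t, (f' t ^ 2 + f t ^ 2) * φ t := integral_const_mul _ _

/-- The integration-by-parts bound: `|∫ φ·2fg'| ≤ (1+2ε) ∫ (f'²+g²+f²)φ`. -/
lemma ibp_bound {ε x₀ : ℝ} (hε : 0 < ε) {f f' g g' : ℝ → ℝ}
    {a0 a2 a10 a12 b0 b2 c2 : ℝ}
    (hfd : ∀ x, HasDerivAt f (f' x) x) (hgd : ∀ x, HasDerivAt g (g' x) x)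
    (hfc : Continuous f) (hf'c : Continuous f') (hgc : Continuous g) (hg'c : Continuous g')
    (hf0 : ∀ x, |f x| ≤ a0) (hf2 : ∀ x, |f x| ≤ a2 / (1 + |x|) ^ 2)
    (hf'0 : ∀ x, |f' x| ≤ a10) (hf'2 : ∀ x, |f' x| ≤ a12 / (1 + |x|) ^ 2)
    (hg0 : ∀ x, |g x| ≤ b0) (hg2 : ∀ x, |g x| ≤ b2 / (1 + |x|) ^ 2)
    (hg'2 : ∀ x, |g' x| ≤ c2 / (1 + |x|) ^ 2) :
    |∫ x : ℝ, phiF ε (x + x₀) * (2 * f x * g' x)|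
      ≤ (1 + 2 * ε) * ∫ x : ℝ, (f' x ^ 2 + g x ^ 2 + f x ^ 2) * phiF ε (x + x₀) := by
  have ha0 : 0 ≤ a0 := (abs_nonneg _).trans (hf0 0)
  have ha2 : 0 ≤ a2 := by have := (abs_nonneg (f 0)).trans (hf2 0); simpa using this
  have ha10 : 0 ≤ a10 := (abs_nonneg _).trans (hf'0 0)
  have hb0 : 0 ≤ b0 := (abs_nonneg _).trans (hg0 0)
  have hb2 : 0 ≤ b2 := by have := (abs_nonneg (g 0)).trans (hg2 0); simpa using this
  have hc2 : 0 ≤ c2 := by have := (abs_nonneg (g' 0)).trans (hg'2 0); simpa using this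
  set φ : ℝ → ℝ := fun t => phiF ε (t + x₀) with hφ
  have hφc : Continuous φ := continuous_phiF ε x₀
  have hφpos : ∀ t, 0 < φ t := fun t => phiF_pos hε (t + x₀)
  set E : ℝ → ℝ := fun t =>
    phiD ε (t + x₀) * (f t * g t) + φ t * (f' t * g t + f t * g' t) with hEdef
  have hEd : ∀ t, HasDerivAt (fun s => φ s * (f s * g s)) (E t) t := fun t =>
    (hasDerivAt_phiF_shift ε x₀ t).mul ((hfd t).mul (hgd t))
  have hEc : Continuous E := by
    apply Continuous.add
    · exact (continuous_phiD ε x₀).mul (hfc.mul hgc)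
    · exact hφc.mul ((hf'c.mul hgc).add (hfc.mul hg'c))
  have hEb : ∀ t, |E t| ≤ (ε ^ 2 * (a0 * b2) + ε / 2 * (a10 * b2 + a0 * c2)) / (1 + |t|) ^ 2 := by
    intro t
    refine (abs_add_le _ _).trans ?_
    have h1 : |phiD ε (t + x₀) * (f t * g t)| ≤ ε ^ 2 * (a0 * (b2 / (1 + |t|) ^ 2)) :=
      mul_abs_le (abs_phiD_le'' hε _) (mul_abs_le (hf0 t) (hg2 t))
    have h2 : |φ t * (f' t * g t + f t * g' t)|
        ≤ ε / 2 * (a10 * (b2 / (1 + |t|) ^ 2) + a0 * (c2 / (1 + |t|) ^ 2)) := by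
      refine mul_abs_le (abs_phiF_le hε _) ((abs_add_le _ _).trans (add_le_add ?_ ?_))
      · exact mul_abs_le (hf'0 t) (hg2 t)
      · exact mul_abs_le (hf0 t) (hg'2 t)
    exact (add_le_add h1 h2).trans (le_of_eq (by ring))
  have intE : Integrable E := integrable_of_decay hEc hEb
  have int1 : Integrable (fun t => phiD ε (t + x₀) * (f t * g t)) := by
    refine integrable_of_decay ((continuous_phiD ε x₀).mul (hfc.mul hgc))
      (c := ε ^ 2 * (a0 * b2)) fun t => ?_
    exact (mul_abs_le (abs_phiD_le'' hε _) (mul_abs_le (hf0 t) (hg2 t))).trans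
      (le_of_eq (by ring))
  have int2 : Integrable (fun t => φ t * (f' t * g t)) := by
    refine integrable_of_decay (hφc.mul (hf'c.mul hgc)) (c := ε / 2 * (a10 * b2)) fun t => ?_
    exact (mul_abs_le (abs_phiF_le hε _) (mul_abs_le (hf'0 t) (hg2 t))).trans
      (le_of_eq (by ring))
  have intQ : Integrable (fun t => (f' t ^ 2 + g t ^ 2 + f t ^ 2) * φ t) := by
    refine integrable_of_decay ((((hf'c.pow 2).add (hgc.pow 2)).add (hfc.pow 2)).mul hφc)
      (c := (a10 * a12 + b0 * b2 + a0 * a2) * (ε / 2)) fun t => ?_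
    have h1 : |f' t ^ 2 + g t ^ 2 + f t ^ 2|
        ≤ a10 * (a12 / (1 + |t|) ^ 2) + b0 * (b2 / (1 + |t|) ^ 2) + a0 * (a2 / (1 + |t|) ^ 2) := by
      refine (abs_add_le _ _).trans (add_le_add ((abs_add_le _ _).trans (add_le_add ?_ ?_)) ?_)
      · rw [pow_two]; exact mul_abs_le (hf'0 t) (hf'2 t)
      · rw [pow_two]; exact mul_abs_le (hg0 t) (hg2 t)
      · rw [pow_two]; exact mul_abs_le (hf0 t) (hf2 t)
    exact (mul_abs_le h1 (abs_phiF_le hε _)).trans (le_of_eq (by ring))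
  have htb : Tendsto (fun t => φ t * (f t * g t)) atBot (𝓝 0) := by
    rw [tendsto_zero_iff_norm_tendsto_zero]
    refine squeeze_zero (fun t => norm_nonneg _) (g := fun t => ε / 2 * (a0 * b2) / (1 + |t|) ^ 2)
      (fun t => ?_) tendsto_decay_atBot
    rw [Real.norm_eq_abs]
    exact (mul_abs_le (abs_phiF_le hε _) (mul_abs_le (hf0 t) (hg2 t))).trans (le_of_eq (by ring))
  have htt : Tendsto (fun t => φ t * (f t * g t)) atTop (𝓝 0) := by
    rw [tendsto_zero_iff_norm_tendsto_zero]
    refine squeeze_zero (fun t => norm_nonneg _) (g := fun t => ε / 2 * (a0 * b2) / (1 + |t|) ^ 2)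
      (fun t => ?_) tendsto_decay_atTop
    rw [Real.norm_eq_abs]
    exact (mul_abs_le (abs_phiF_le hε _) (mul_abs_le (hf0 t) (hg2 t))).trans (le_of_eq (by ring))
  have hE0 : ∫ t : ℝ, E t = 0 := by
    have h1 : ∫ t in Iic (0:ℝ), E t = φ 0 * (f 0 * g 0) - 0 :=
      integral_Iic_of_hasDerivAt_of_tendsto' (fun t _ => hEd t) intE.integrableOn htb
    have h2 : ∫ t in Ioi (0:ℝ), E t = 0 - φ 0 * (f 0 * g 0) :=
      integral_Ioi_of_hasDerivAt_of_tendsto' (fun t _ => hEd t) intE.integrableOn htt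
    rw [← intervalIntegral.integral_Iic_add_Ioi (b := (0:ℝ)) intE.integrableOn intE.integrableOn, h1, h2]
    ring
  have hkey : ∀ t, φ t * (2 * f t * g' t)
      = 2 * E t - 2 * (phiD ε (t + x₀) * (f t * g t)) - 2 * (φ t * (f' t * g t)) := by
    intro t; simp only [hEdef]; ring
  have hsplit : ∫ t : ℝ, φ t * (2 * f t * g' t)
      = - (2 * ∫ t : ℝ, phiD ε (t + x₀) * (f t * g t)) - 2 * ∫ t : ℝ, φ t * (f' t * g t) := by
    have e1 : ∫ t : ℝ, (2 * E t - 2 * (phiD ε (t + x₀) * (f t * g t)) - 2 * (φ t * (f' t * g t)))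
        = (∫ t : ℝ, (2 * E t - 2 * (phiD ε (t + x₀) * (f t * g t))))
          - ∫ t : ℝ, 2 * (φ t * (f' t * g t)) :=
      integral_sub ((intE.const_mul 2).sub (int1.const_mul 2)) (int2.const_mul 2)
    have e2 : ∫ t : ℝ, (2 * E t - 2 * (phiD ε (t + x₀) * (f t * g t)))
        = (∫ t : ℝ, 2 * E t) - ∫ t : ℝ, 2 * (phiD ε (t + x₀) * (f t * g t)) :=
      integral_sub (intE.const_mul 2) (int1.const_mul 2)
    rw [show (fun t => φ t * (2 * f t * g' t)) = fun t =>
        2 * E t - 2 * (phiD ε (t + x₀) * (f t * g t)) - 2 * (φ t * (f' t * g t)) from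
      funext hkey, e1, e2, integral_const_mul, integral_const_mul, integral_const_mul, hE0]
    ring
  rw [hsplit]
  have habs : |(- (2 * ∫ t : ℝ, phiD ε (t + x₀) * (f t * g t))
      - 2 * ∫ t : ℝ, φ t * (f' t * g t))|
      ≤ 2 * (∫ t : ℝ, |phiD ε (t + x₀) * (f t * g t)|) + 2 * ∫ t : ℝ, |φ t * (f' t * g t)| := by
    refine (abs_sub _ _).trans (add_le_add ?_ ?_)
    · rw [abs_neg, abs_mul, abs_two]
      exact mul_le_mul_of_nonneg_left (by
        simpa only [Real.norm_eq_abs] using norm_integral_le_integral_norm (μ := (volume : Measure ℝ))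
          (fun t => phiD ε (t + x₀) * (f t * g t))) (by norm_num)
    · rw [abs_mul, abs_two]
      exact mul_le_mul_of_nonneg_left (by
        simpa only [Real.norm_eq_abs] using norm_integral_le_integral_norm (μ := (volume : Measure ℝ))
          (fun t => φ t * (f' t * g t))) (by norm_num)
  refine habs.trans ?_
  rw [← integral_const_mul, ← integral_const_mul, ← integral_add
    (int1.abs.const_mul 2) (int2.abs.const_mul 2)]
  refine (integral_mono ((int1.abs.const_mul 2).add (int2.abs.const_mul 2))
    (intQ.const_mul _) fun t => ?_).trans (le_of_eq (integral_const_mul _ _))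
  have h1 : |phiD ε (t + x₀) * (f t * g t)| ≤ 2 * ε * φ t * (|f t| * |g t|) := by
    rw [abs_mul, abs_mul]
    exact mul_le_mul_of_nonneg_right (abs_phiD_le' hε _)
      (mul_nonneg (abs_nonneg _) (abs_nonneg _))
  have h2 : |φ t * (f' t * g t)| ≤ φ t * (|f' t| * |g t|) := by
    rw [abs_mul, abs_mul, abs_of_pos (hφpos t)]
  have h3 : 2 * (|f t| * |g t|) ≤ f t ^ 2 + g t ^ 2 := by
    nlinarith [sq_nonneg (|f t| - |g t|), sq_abs (f t), sq_abs (g t)]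
  have h4 : 2 * (|f' t| * |g t|) ≤ f' t ^ 2 + g t ^ 2 := by
    nlinarith [sq_nonneg (|f' t| - |g t|), sq_abs (f' t), sq_abs (g t)]
  have h5 : 0 < φ t := hφpos t
  calc 2 * |phiD ε (t + x₀) * (f t * g t)| + 2 * |φ t * (f' t * g t)|
      ≤ 2 * (2 * ε * φ t * (|f t| * |g t|)) + 2 * (φ t * (|f' t| * |g t|)) :=
        add_le_add (mul_le_mul_of_nonneg_left h1 (by norm_num))
          (mul_le_mul_of_nonneg_left h2 (by norm_num))
    _ = 2 * ε * φ t * (2 * (|f t| * |g t|)) + φ t * (2 * (|f' t| * |g t|)) := by ring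
    _ ≤ 2 * ε * φ t * (f t ^ 2 + g t ^ 2) + φ t * (f' t ^ 2 + g t ^ 2) :=
        add_le_add (mul_le_mul_of_nonneg_left h3 (by positivity))
          (mul_le_mul_of_nonneg_left h4 h5.le)
    _ ≤ (1 + 2 * ε) * ((f' t ^ 2 + g t ^ 2 + f t ^ 2) * φ t) := by
        nlinarith [sq_nonneg (f t), sq_nonneg (g t), sq_nonneg (f' t),
          mul_nonneg (mul_nonneg hε.le h5.le) (sq_nonneg (f' t)),
          mul_nonneg (mul_nonneg hε.le h5.le) (sq_nonneg (g t)),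
          mul_nonneg h5.le (sq_nonneg (g t))]

lemma integrable_decay_fn {c : ℝ} (hc : 0 ≤ c) :
    Integrable (fun x : ℝ => c / (1 + |x|) ^ 2) := by
  refine integrable_of_decay (Continuous.div continuous_const (by fun_prop)
    (fun x => by positivity)) (c := c) fun x => ?_
  rw [abs_of_nonneg (by positivity)]

lemma integrable_P {ε x₀ : ℝ} (hε : 0 < ε) {f : ℝ → ℝ} {c0 c2 : ℝ} (hfc : Continuous f)
    (h0 : ∀ x, |f x| ≤ c0) (h2 : ∀ x, |f x| ≤ c2 / (1 + |x|) ^ 2) :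
    Integrable (fun x => phiF ε (x + x₀) * f x ^ 2) := by
  refine integrable_of_decay ((continuous_phiF ε x₀).mul (hfc.pow 2))
    (c := ε / 2 * (c0 * c2)) fun t => ?_
  rw [pow_two]
  exact (mul_abs_le (abs_phiF_le hε _) (mul_abs_le (h0 t) (h2 t))).trans (le_of_eq (by ring))

lemma integrable_F4 {ε x₀ : ℝ} (hε : 0 < ε) {f : ℝ → ℝ} {c0 c2 : ℝ} (hfc : Continuous f)
    (h0 : ∀ x, |f x| ≤ c0) (h2 : ∀ x, |f x| ≤ c2 / (1 + |x|) ^ 2) :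
    Integrable (fun x => phiF ε (x + x₀) ^ 2 * f x ^ 4) := by
  refine integrable_of_decay (((continuous_phiF ε x₀).pow 2).mul (hfc.pow 4))
    (c := ε / 2 * (ε / 2 * (c0 * (c0 * (c0 * c2))))) fun t => ?_
  refine le_trans (le_of_eq (congrArg abs (by ring :
    phiF ε (t + x₀) ^ 2 * f t ^ 4
      = phiF ε (t + x₀) * (phiF ε (t + x₀) * (f t * (f t * (f t * f t))))))) ?_
  refine (mul_abs_le (abs_phiF_le hε _) (mul_abs_le (abs_phiF_le hε _)
    (mul_abs_le (h0 t) (mul_abs_le (h0 t) (mul_abs_le (h0 t) (h2 t)))))).trans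
    (le_of_eq (by ring))

lemma integrable_two {ε x₀ : ℝ} (hε : 0 < ε) {f f' : ℝ → ℝ} {a0 a2 a10 a12 : ℝ}
    (hfc : Continuous f) (hf'c : Continuous f')
    (hf0 : ∀ x, |f x| ≤ a0) (hf2 : ∀ x, |f x| ≤ a2 / (1 + |x|) ^ 2)
    (hf'0 : ∀ x, |f' x| ≤ a10) (hf'2 : ∀ x, |f' x| ≤ a12 / (1 + |x|) ^ 2) :
    Integrable (fun t => (f' t ^ 2 + f t ^ 2) * phiF ε (t + x₀)) := by
  refine integrable_of_decay (((hf'c.pow 2).add (hfc.pow 2)).mul (continuous_phiF ε x₀))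
    (c := (a10 * a12 + a0 * a2) * (ε / 2)) fun t => ?_
  have h1 : |(f' t ^ 2 + f t ^ 2)| ≤ a10 * (a12 / (1 + |t|) ^ 2) + a0 * (a2 / (1 + |t|) ^ 2) := by
    refine (abs_add_le _ _).trans (add_le_add ?_ ?_)
    · rw [pow_two]; exact mul_abs_le (hf'0 t) (hf'2 t)
    · rw [pow_two]; exact mul_abs_le (hf0 t) (hf2 t)
  exact (mul_abs_le h1 (abs_phiF_le hε _)).trans (le_of_eq (by ring))

lemma integrable_three {ε x₀ : ℝ} (hε : 0 < ε) {f f' g : ℝ → ℝ} {a0 a2 a10 a12 b0 b2 : ℝ}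
    (hfc : Continuous f) (hf'c : Continuous f') (hgc : Continuous g)
    (hf0 : ∀ x, |f x| ≤ a0) (hf2 : ∀ x, |f x| ≤ a2 / (1 + |x|) ^ 2)
    (hf'0 : ∀ x, |f' x| ≤ a10) (hf'2 : ∀ x, |f' x| ≤ a12 / (1 + |x|) ^ 2)
    (hg0 : ∀ x, |g x| ≤ b0) (hg2 : ∀ x, |g x| ≤ b2 / (1 + |x|) ^ 2) :
    Integrable (fun t => (f' t ^ 2 + g t ^ 2 + f t ^ 2) * phiF ε (t + x₀)) := by
  refine integrable_of_decay ((((hf'c.pow 2).add (hgc.pow 2)).add (hfc.pow 2)).mul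
    (continuous_phiF ε x₀)) (c := (a10 * a12 + b0 * b2 + a0 * a2) * (ε / 2)) fun t => ?_
  have h1 : |f' t ^ 2 + g t ^ 2 + f t ^ 2|
      ≤ a10 * (a12 / (1 + |t|) ^ 2) + b0 * (b2 / (1 + |t|) ^ 2) + a0 * (a2 / (1 + |t|) ^ 2) := by
    refine (abs_add_le _ _).trans (add_le_add ((abs_add_le _ _).trans (add_le_add ?_ ?_)) ?_)
    · rw [pow_two]; exact mul_abs_le (hf'0 t) (hf'2 t)
    · rw [pow_two]; exact mul_abs_le (hg0 t) (hg2 t)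
    · rw [pow_two]; exact mul_abs_le (hf0 t) (hf2 t)
  exact (mul_abs_le h1 (abs_phiF_le hε _)).trans (le_of_eq (by ring))

end WQE

open WQE in
/-- A weighted quartic estimate:
`(∫∫ (χ_ε')² w⁴)^{1/2} ≤ C ∫∫ ((∂_x w)² + (∂_x⁻¹∂_y w)² + w²) χ_ε'`, uniformly in `x₀`. -/
theorem weighted_quartic_estimate (ε : ℝ) (hε : 0 < ε) :
    ∃ C > 0, ∀ x₀ : ℝ, ∀ w v : ℝ → ℝ → ℝ, PeriodicEPair w v →
      Real.sqrt (∫ y in Set.Ioc (0 : ℝ) (2 * π), ∫ x : ℝ,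
          (deriv (chiW ε) (x + x₀)) ^ 2 * (w x y) ^ 4)
        ≤ C * ∫ y in Set.Ioc (0 : ℝ) (2 * π), ∫ x : ℝ,
            ((deriv (fun x' => w x' y) x) ^ 2 + (v x y) ^ 2 + (w x y) ^ 2)
              * deriv (chiW ε) (x + x₀) := by
  have hπ := Real.pi_pos
  have h1ε : (0:ℝ) < 1 + 2 * ε := by linarith
  refine ⟨Real.sqrt ((1 + 2 * ε) * (1 / (2 * π) + (1 + 2 * ε))), ?_, ?_⟩
  · refine Real.sqrt_pos.mpr (mul_pos h1ε ?_)
    have : (0:ℝ) < 1 / (2 * π) := by positivity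
    linarith
  intro x₀ w v hP
  obtain ⟨a0, ha0'⟩ := hP.decay_w 0 0
  obtain ⟨a2, ha2'⟩ := hP.decay_w 0 2
  obtain ⟨a10, ha10'⟩ := hP.decay_w 1 0
  obtain ⟨a12, ha12'⟩ := hP.decay_w 1 2
  obtain ⟨b0, hb0'⟩ := hP.decay_v 0 0
  obtain ⟨b2, hb2'⟩ := hP.decay_v 0 2
  obtain ⟨c2b, hc2'⟩ := hP.decay_v 1 2
  have hW := hP.smooth_w
  have hV := hP.smooth_v
  have hWc : Continuous (fun p : ℝ × ℝ => w p.1 p.2) := hW.continuous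
  have hVc : Continuous (fun p : ℝ × ℝ => v p.1 p.2) := hV.continuous
  -- pointwise bounds
  have hw0 : ∀ x y, |w x y| ≤ a0 := by
    intro x y
    have := ha0' x y
    rwa [norm_iteratedFDeriv_zero, Real.norm_eq_abs, pow_zero, div_one] at this
  have hw2 : ∀ x y, |w x y| ≤ a2 / (1 + |x|) ^ 2 := by
    intro x y
    have := ha2' x y
    rwa [norm_iteratedFDeriv_zero, Real.norm_eq_abs] at this
  have hv0 : ∀ x y, |v x y| ≤ b0 := by
    intro x y
    have := hb0' x y
    rwa [norm_iteratedFDeriv_zero, Real.norm_eq_abs, pow_zero, div_one] at this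
  have hv2 : ∀ x y, |v x y| ≤ b2 / (1 + |x|) ^ 2 := by
    intro x y
    have := hb2' x y
    rwa [norm_iteratedFDeriv_zero, Real.norm_eq_abs] at this
  have hwx0 : ∀ x y, |fderiv ℝ (fun p : ℝ × ℝ => w p.1 p.2) (x, y) ((1:ℝ), (0:ℝ))| ≤ a10 := by
    intro x y
    have h1 := norm_fderiv_apply_le (F := fun p : ℝ × ℝ => w p.1 p.2) (x, y) ((1:ℝ), (0:ℝ)) norm_one_zero
    have h2 := ha10' x y
    rw [pow_zero, div_one] at h2
    rw [← Real.norm_eq_abs]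
    exact h1.trans h2
  have hwx2 : ∀ x y, |fderiv ℝ (fun p : ℝ × ℝ => w p.1 p.2) (x, y) ((1:ℝ), (0:ℝ))| ≤ a12 / (1 + |x|) ^ 2 := by
    intro x y
    have h1 := norm_fderiv_apply_le (F := fun p : ℝ × ℝ => w p.1 p.2) (x, y) ((1:ℝ), (0:ℝ)) norm_one_zero
    rw [← Real.norm_eq_abs]
    exact h1.trans (ha12' x y)
  have hvx2 : ∀ x y, |fderiv ℝ (fun p : ℝ × ℝ => v p.1 p.2) (x, y) ((1:ℝ), (0:ℝ))| ≤ c2b / (1 + |x|) ^ 2 := by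
    intro x y
    have h1 := norm_fderiv_apply_le (F := fun p : ℝ × ℝ => v p.1 p.2) (x, y) ((1:ℝ), (0:ℝ)) norm_one_zero
    rw [← Real.norm_eq_abs]
    exact h1.trans (hc2' x y)
  have ha0nn : 0 ≤ a0 := (abs_nonneg _).trans (hw0 0 0)
  have ha2nn : 0 ≤ a2 := by have := (abs_nonneg (w 0 0)).trans (hw2 0 0); simpa using this
  have ha10nn : 0 ≤ a10 := (abs_nonneg _).trans (hwx0 0 0)
  have ha12nn : 0 ≤ a12 := by
    have := (abs_nonneg (fderiv ℝ (fun p : ℝ × ℝ => w p.1 p.2) (0, 0) ((1:ℝ), (0:ℝ)))).trans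
      (hwx2 0 0)
    simpa using this
  have hb0nn : 0 ≤ b0 := (abs_nonneg _).trans (hv0 0 0)
  have hb2nn : 0 ≤ b2 := by have := (abs_nonneg (v 0 0)).trans (hv2 0 0); simpa using this
  have hc2nn : 0 ≤ c2b := by have := (abs_nonneg (fderiv ℝ (fun p : ℝ × ℝ => v p.1 p.2) (0, 0) ((1:ℝ), (0:ℝ)))).trans (hvx2 0 0); simpa using this
  -- derivative facts
  have hwd : ∀ x y, HasDerivAt (fun x' => w x' y) (fderiv ℝ (fun p : ℝ × ℝ => w p.1 p.2) (x, y) ((1:ℝ), (0:ℝ))) x :=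
    fun x y => hasDerivAt_fst hW x y
  have hvd : ∀ x y, HasDerivAt (fun x' => v x' y) (fderiv ℝ (fun p : ℝ × ℝ => v p.1 p.2) (x, y) ((1:ℝ), (0:ℝ))) x :=
    fun x y => hasDerivAt_fst hV x y
  have hwyd : ∀ x y, HasDerivAt (fun y' => w x y') (fderiv ℝ (fun p : ℝ × ℝ => w p.1 p.2) (x, y) ((0:ℝ), (1:ℝ))) y :=
    fun x y => hasDerivAt_snd hW x y
  have hcompat : ∀ x y, fderiv ℝ (fun p : ℝ × ℝ => v p.1 p.2) (x, y) ((1:ℝ), (0:ℝ)) = fderiv ℝ (fun p : ℝ × ℝ => w p.1 p.2) (x, y) ((0:ℝ), (1:ℝ)) := by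
    intro x y
    rw [← (hvd x y).deriv, ← (hwyd x y).deriv]
    exact hP.compat x y
  have hdw : ∀ x y, deriv (fun x' => w x' y) x = fderiv ℝ (fun p : ℝ × ℝ => w p.1 p.2) (x, y) ((1:ℝ), (0:ℝ)) := fun x y => (hwd x y).deriv
  -- continuity
  have hWxc : Continuous (fun p : ℝ × ℝ => fderiv ℝ (fun p : ℝ × ℝ => w p.1 p.2) p ((1:ℝ), (0:ℝ))) := continuous_fderiv_apply hW _
  have hVxc : Continuous (fun p : ℝ × ℝ => fderiv ℝ (fun p : ℝ × ℝ => v p.1 p.2) p ((1:ℝ), (0:ℝ))) := continuous_fderiv_apply hV _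
  have hxy : ∀ y : ℝ, Continuous (fun x : ℝ => (x, y)) :=
    fun y => continuous_id.prodMk continuous_const
  have hxy2 : ∀ x : ℝ, Continuous (fun t : ℝ => (x, t)) :=
    fun x => continuous_const.prodMk continuous_id
  have hwc1 : ∀ y, Continuous (fun x => w x y) := fun y => hWc.comp (hxy y)
  have hvc1 : ∀ y, Continuous (fun x => v x y) := fun y => hVc.comp (hxy y)
  have hwxc1 : ∀ y, Continuous (fun x => fderiv ℝ (fun p : ℝ × ℝ => w p.1 p.2) (x, y) ((1:ℝ), (0:ℝ))) := fun y => hWxc.comp (hxy y)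
  have hvxc1 : ∀ y, Continuous (fun x => fderiv ℝ (fun p : ℝ × ℝ => v p.1 p.2) (x, y) ((1:ℝ), (0:ℝ))) := fun y => hVxc.comp (hxy y)
  have hwc2 : ∀ x, Continuous (fun t => w x t) := fun x => hWc.comp (hxy2 x)
  have hvc2 : ∀ x, Continuous (fun t => v x t) := fun x => hVc.comp (hxy2 x)
  have hwxc2 : ∀ x, Continuous (fun t => fderiv ℝ (fun p : ℝ × ℝ => w p.1 p.2) (x, t) ((1:ℝ), (0:ℝ))) := fun x => hWxc.comp (hxy2 x)
  have hvxc2 : ∀ x, Continuous (fun t => fderiv ℝ (fun p : ℝ × ℝ => v p.1 p.2) (x, t) ((1:ℝ), (0:ℝ))) := fun x => hVxc.comp (hxy2 x)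
  -- rewrite the goal
  simp only [WQE.deriv_chiW, hdw]
  -- integrability in x, for every fixed y
  have intP : ∀ y : ℝ, Integrable (fun x => WQE.phiF ε (x + x₀) * w x y ^ 2) :=
    fun y => integrable_P hε (hwc1 y) (fun x => hw0 x y) (fun x => hw2 x y)
  have intF4 : ∀ y : ℝ, Integrable (fun x => WQE.phiF ε (x + x₀) ^ 2 * w x y ^ 4) :=
    fun y => integrable_F4 hε (hwc1 y) (fun x => hw0 x y) (fun x => hw2 x y)
  have intQ : ∀ y : ℝ,
      Integrable (fun x => (fderiv ℝ (fun p : ℝ × ℝ => w p.1 p.2) (x, y) ((1:ℝ), (0:ℝ)) ^ 2 + v x y ^ 2 + w x y ^ 2) * WQE.phiF ε (x + x₀)) :=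
    fun y => integrable_three hε (hwc1 y) (hwxc1 y) (hvc1 y)
      (fun x => hw0 x y) (fun x => hw2 x y) (fun x => hwx0 x y) (fun x => hwx2 x y)
      (fun x => hv0 x y) (fun x => hv2 x y)
  have intS : ∀ y : ℝ,
      Integrable (fun x => (fderiv ℝ (fun p : ℝ × ℝ => w p.1 p.2) (x, y) ((1:ℝ), (0:ℝ)) ^ 2 + w x y ^ 2) * WQE.phiF ε (x + x₀)) :=
    fun y => integrable_two hε (hwc1 y) (hwxc1 y)
      (fun x => hw0 x y) (fun x => hw2 x y) (fun x => hwx0 x y) (fun x => hwx2 x y)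
  -- nonnegativity
  have hQnn : ∀ y x : ℝ, 0 ≤ (fderiv ℝ (fun p : ℝ × ℝ => w p.1 p.2) (x, y) ((1:ℝ), (0:ℝ)) ^ 2 + v x y ^ 2 + w x y ^ 2) * WQE.phiF ε (x + x₀) :=
    fun y x => mul_nonneg (by positivity) (phiF_pos hε _).le
  have hhnn : ∀ t : ℝ, 0 ≤ (∫ x : ℝ, (fderiv ℝ (fun p : ℝ × ℝ => w p.1 p.2) (x, t) ((1:ℝ), (0:ℝ)) ^ 2 + v x t ^ 2 + w x t ^ 2) * WQE.phiF ε (x + x₀)) := fun t => integral_nonneg (fun x => hQnn t x)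
  have hRnn : 0 ≤ (∫ t in Set.Ioc (0:ℝ) (2 * π), (∫ x : ℝ, (fderiv ℝ (fun p : ℝ × ℝ => w p.1 p.2) (x, t) ((1:ℝ), (0:ℝ)) ^ 2 + v x t ^ 2 + w x t ^ 2) * WQE.phiF ε (x + x₀))) := setIntegral_nonneg measurableSet_Ioc fun t _ => hhnn t
  -- m ≤ hh pointwise
  have hmhh : ∀ t : ℝ, (∫ x : ℝ, WQE.phiF ε (x + x₀) * w x t ^ 2) ≤ (∫ x : ℝ, (fderiv ℝ (fun p : ℝ × ℝ => w p.1 p.2) (x, t) ((1:ℝ), (0:ℝ)) ^ 2 + v x t ^ 2 + w x t ^ 2) * WQE.phiF ε (x + x₀)) := by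
    intro t
    refine integral_mono (intP t) (intQ t) fun x => ?_
    have h1 := (phiF_pos hε (x + x₀))
    nlinarith [mul_nonneg (sq_nonneg (fderiv ℝ (fun p : ℝ × ℝ => w p.1 p.2) (x, t) ((1:ℝ), (0:ℝ)))) h1.le,
      mul_nonneg (sq_nonneg (v x t)) h1.le]
  -- continuity in y of the three integrals, by dominated convergence
  have hhc : Continuous (fun t : ℝ => (∫ x : ℝ, (fderiv ℝ (fun p : ℝ × ℝ => w p.1 p.2) (x, t) ((1:ℝ), (0:ℝ)) ^ 2 + v x t ^ 2 + w x t ^ 2) * WQE.phiF ε (x + x₀))) := by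
    refine continuous_of_dominated
      (bound := fun x => (a10 * a12 + b0 * b2 + a0 * a2) * (ε / 2) / (1 + |x|) ^ 2)
      (fun t => ((((hwxc1 t).pow 2).add ((hvc1 t).pow 2)).add
        ((hwc1 t).pow 2)).mul (continuous_phiF ε x₀) |>.aestronglyMeasurable)
      (fun t => ae_of_all _ fun x => ?_) ?_ (ae_of_all _ fun x => ?_)
    · rw [Real.norm_eq_abs]
      have h1 : |fderiv ℝ (fun p : ℝ × ℝ => w p.1 p.2) (x, t) ((1:ℝ), (0:ℝ)) ^ 2 + v x t ^ 2 + w x t ^ 2|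
          ≤ a10 * (a12 / (1 + |x|) ^ 2) + b0 * (b2 / (1 + |x|) ^ 2)
            + a0 * (a2 / (1 + |x|) ^ 2) := by
        refine (abs_add_le _ _).trans (add_le_add ((abs_add_le _ _).trans (add_le_add ?_ ?_)) ?_)
        · rw [pow_two]; exact mul_abs_le (hwx0 x t) (hwx2 x t)
        · rw [pow_two]; exact mul_abs_le (hv0 x t) (hv2 x t)
        · rw [pow_two]; exact mul_abs_le (hw0 x t) (hw2 x t)
      exact (mul_abs_le h1 (abs_phiF_le hε _)).trans (le_of_eq (by ring))
    · exact integrable_decay_fn (mul_nonneg (by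
        exact add_nonneg (add_nonneg (mul_nonneg ha10nn ha12nn) (mul_nonneg hb0nn hb2nn))
          (mul_nonneg ha0nn ha2nn)) (by positivity))
    · exact ((((hwxc2 x).pow 2).add ((hvc2 x).pow 2)).add ((hwc2 x).pow 2)).mul continuous_const
  have hmc : Continuous (fun t : ℝ => (∫ x : ℝ, WQE.phiF ε (x + x₀) * w x t ^ 2)) := by
    refine continuous_of_dominated
      (bound := fun x => ε / 2 * (a0 * a2) / (1 + |x|) ^ 2)
      (fun t => ((continuous_phiF ε x₀).mul ((hwc1 t).pow 2)).aestronglyMeasurable)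
      (fun t => ae_of_all _ fun x => ?_) ?_ (ae_of_all _ fun x => ?_)
    · rw [Real.norm_eq_abs, pow_two]
      exact (mul_abs_le (abs_phiF_le hε _)
        (mul_abs_le (hw0 x t) (hw2 x t))).trans (le_of_eq (by ring))
    · exact integrable_decay_fn (mul_nonneg (by positivity) (mul_nonneg ha0nn ha2nn))
    · exact continuous_const.mul ((hwc2 x).pow 2)
  have hF4c : Continuous (fun t : ℝ => (∫ x : ℝ, WQE.phiF ε (x + x₀) ^ 2 * w x t ^ 4)) := by
    refine continuous_of_dominated
      (bound := fun x => ε / 2 * (ε / 2 * (a0 * (a0 * (a0 * a2)))) / (1 + |x|) ^ 2)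
      (fun t => (((continuous_phiF ε x₀).pow 2).mul ((hwc1 t).pow 4)).aestronglyMeasurable)
      (fun t => ae_of_all _ fun x => ?_) ?_ (ae_of_all _ fun x => ?_)
    · rw [Real.norm_eq_abs]
      refine le_trans (le_of_eq (congrArg abs (by ring :
        WQE.phiF ε (x + x₀) ^ 2 * w x t ^ 4
          = WQE.phiF ε (x + x₀) * (WQE.phiF ε (x + x₀) * (w x t * (w x t * (w x t * w x t))))))) ?_
      exact (mul_abs_le (abs_phiF_le hε _) (mul_abs_le (abs_phiF_le hε _)
        (mul_abs_le (hw0 x t) (mul_abs_le (hw0 x t)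
          (mul_abs_le (hw0 x t) (hw2 x t)))))).trans (le_of_eq (by ring))
    · exact integrable_decay_fn (mul_nonneg (by positivity) (mul_nonneg (by positivity)
        (mul_nonneg ha0nn (mul_nonneg ha0nn (mul_nonneg ha0nn ha2nn)))))
    · exact continuous_const.mul ((hwc2 x).pow 4)
  have hhIoc : IntegrableOn (fun t : ℝ => (∫ x : ℝ, (fderiv ℝ (fun p : ℝ × ℝ => w p.1 p.2) (x, t) ((1:ℝ), (0:ℝ)) ^ 2 + v x t ^ 2 + w x t ^ 2) * WQE.phiF ε (x + x₀))) (Set.Ioc 0 (2 * π)) := hhc.integrableOn_Ioc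
  have hmIoc : IntegrableOn (fun t : ℝ => (∫ x : ℝ, WQE.phiF ε (x + x₀) * w x t ^ 2)) (Set.Ioc 0 (2 * π)) := hmc.integrableOn_Ioc
  have hF4Ioc : IntegrableOn (fun t : ℝ => (∫ x : ℝ, WQE.phiF ε (x + x₀) ^ 2 * w x t ^ 4)) (Set.Ioc 0 (2 * π)) := hF4c.integrableOn_Ioc
  -- the sup-in-x bound
  have hsup : ∀ y x : ℝ, WQE.phiF ε (x + x₀) * w x y ^ 2 ≤ (1 + 2 * ε) * (∫ x : ℝ, (fderiv ℝ (fun p : ℝ × ℝ => w p.1 p.2) (x, y) ((1:ℝ), (0:ℝ)) ^ 2 + v x y ^ 2 + w x y ^ 2) * WQE.phiF ε (x + x₀)) := by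
    intro y x
    have h1 := sup_bound (x₀ := x₀) hε (f := fun x => w x y) (f' := fun x => fderiv ℝ (fun p : ℝ × ℝ => w p.1 p.2) (x, y) ((1:ℝ), (0:ℝ)))
      (fun x => hwd x y) (hwc1 y) (hwxc1 y) (fun x => hw0 x y) (fun x => hw2 x y)
      (fun x => hwx0 x y) (fun x => hwx2 x y) x
    refine h1.trans (mul_le_mul_of_nonneg_left ?_ h1ε.le)
    refine integral_mono (intS y) (intQ y) fun x' => ?_
    have h2 := (phiF_pos hε (x' + x₀))
    nlinarith [mul_nonneg (sq_nonneg (v x' y)) h2.le]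
  -- step 1 : (∫ x : ℝ, WQE.phiF ε (x + x₀) ^ 2 * w x y ^ 4) ≤ (1+2ε) hh y * m y
  have hstep1 : ∀ y : ℝ, (∫ x : ℝ, WQE.phiF ε (x + x₀) ^ 2 * w x y ^ 4) ≤ (1 + 2 * ε) * (∫ x : ℝ, (fderiv ℝ (fun p : ℝ × ℝ => w p.1 p.2) (x, y) ((1:ℝ), (0:ℝ)) ^ 2 + v x y ^ 2 + w x y ^ 2) * WQE.phiF ε (x + x₀)) * (∫ x : ℝ, WQE.phiF ε (x + x₀) * w x y ^ 2) := by
    intro y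
    calc (∫ x : ℝ, WQE.phiF ε (x + x₀) ^ 2 * w x y ^ 4) ≤ ∫ x : ℝ, ((1 + 2 * ε) * (∫ x : ℝ, (fderiv ℝ (fun p : ℝ × ℝ => w p.1 p.2) (x, y) ((1:ℝ), (0:ℝ)) ^ 2 + v x y ^ 2 + w x y ^ 2) * WQE.phiF ε (x + x₀))) * (WQE.phiF ε (x + x₀) * w x y ^ 2) := by
          refine integral_mono (intF4 y) ((intP y).const_mul _) fun x => ?_
          have h2 : (0:ℝ) ≤ WQE.phiF ε (x + x₀) * w x y ^ 2 :=
            mul_nonneg (phiF_pos hε _).le (sq_nonneg _)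
          calc WQE.phiF ε (x + x₀) ^ 2 * w x y ^ 4
              = (WQE.phiF ε (x + x₀) * w x y ^ 2) * (WQE.phiF ε (x + x₀) * w x y ^ 2) := by ring
            _ ≤ ((1 + 2 * ε) * (∫ x : ℝ, (fderiv ℝ (fun p : ℝ × ℝ => w p.1 p.2) (x, y) ((1:ℝ), (0:ℝ)) ^ 2 + v x y ^ 2 + w x y ^ 2) * WQE.phiF ε (x + x₀))) * (WQE.phiF ε (x + x₀) * w x y ^ 2) :=
                mul_le_mul_of_nonneg_right (hsup y x) h2
      _ = (1 + 2 * ε) * (∫ x : ℝ, (fderiv ℝ (fun p : ℝ × ℝ => w p.1 p.2) (x, y) ((1:ℝ), (0:ℝ)) ^ 2 + v x y ^ 2 + w x y ^ 2) * WQE.phiF ε (x + x₀)) * (∫ x : ℝ, WQE.phiF ε (x + x₀) * w x y ^ 2) := integral_const_mul _ _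
  -- the difference bound on m, via Fubini and integration by parts
  have hdiff : ∀ z ∈ Set.Ioc (0:ℝ) (2 * π), ∀ y ∈ Set.Ioc (0:ℝ) (2 * π), z ≤ y →
      |(∫ x : ℝ, WQE.phiF ε (x + x₀) * w x y ^ 2) - (∫ x : ℝ, WQE.phiF ε (x + x₀) * w x z ^ 2)| ≤ (1 + 2 * ε) * (∫ t in Set.Ioc (0:ℝ) (2 * π), (∫ x : ℝ, (fderiv ℝ (fun p : ℝ × ℝ => w p.1 p.2) (x, t) ((1:ℝ), (0:ℝ)) ^ 2 + v x t ^ 2 + w x t ^ 2) * WQE.phiF ε (x + x₀))) := by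
    intro z hz y hy hzy
    have hsq : ∀ x t : ℝ, HasDerivAt (fun y' => w x y' ^ 2) (2 * w x t * fderiv ℝ (fun p : ℝ × ℝ => v p.1 p.2) (x, t) ((1:ℝ), (0:ℝ))) t := by
      intro x t
      have h1 := (hwyd x t).pow 2
      rw [← hcompat x t] at h1
      refine h1.congr_deriv ?_
      push_cast
      ring
    have hFTCy : ∀ x : ℝ, w x y ^ 2 - w x z ^ 2
        = ∫ t in z..y, 2 * w x t * fderiv ℝ (fun p : ℝ × ℝ => v p.1 p.2) (x, t) ((1:ℝ), (0:ℝ)) := by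
      intro x
      rw [intervalIntegral.integral_eq_sub_of_hasDerivAt (fun t _ => hsq x t)
        (((continuous_const.mul (hwc2 x)).mul (hvxc2 x)).intervalIntegrable z y)]
    have hrep : (∫ x : ℝ, WQE.phiF ε (x + x₀) * w x y ^ 2) - (∫ x : ℝ, WQE.phiF ε (x + x₀) * w x z ^ 2)
        = ∫ x : ℝ, ∫ t in Set.Ioc z y, WQE.phiF ε (x + x₀) * (2 * w x t * fderiv ℝ (fun p : ℝ × ℝ => v p.1 p.2) (x, t) ((1:ℝ), (0:ℝ))) := by
      rw [← integral_sub (intP y) (intP z)]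
      congr 1
      funext x
      calc WQE.phiF ε (x + x₀) * w x y ^ 2 - WQE.phiF ε (x + x₀) * w x z ^ 2
          = WQE.phiF ε (x + x₀) * (w x y ^ 2 - w x z ^ 2) := by ring
        _ = WQE.phiF ε (x + x₀) * ∫ t in z..y, 2 * w x t * fderiv ℝ (fun p : ℝ × ℝ => v p.1 p.2) (x, t) ((1:ℝ), (0:ℝ)) := by rw [hFTCy x]
        _ = ∫ t in z..y, WQE.phiF ε (x + x₀) * (2 * w x t * fderiv ℝ (fun p : ℝ × ℝ => v p.1 p.2) (x, t) ((1:ℝ), (0:ℝ))) :=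
            (intervalIntegral.integral_const_mul _ _).symm
        _ = ∫ t in Set.Ioc z y, WQE.phiF ε (x + x₀) * (2 * w x t * fderiv ℝ (fun p : ℝ × ℝ => v p.1 p.2) (x, t) ((1:ℝ), (0:ℝ))) := by
            rw [intervalIntegral.integral_of_le hzy]
    have hint : Integrable
        (Function.uncurry (fun x t => WQE.phiF ε (x + x₀) * (2 * w x t * fderiv ℝ (fun p : ℝ × ℝ => v p.1 p.2) (x, t) ((1:ℝ), (0:ℝ)))))
        (volume.prod (volume.restrict (Set.Ioc z y))) := by
      refine Integrable.mono'
        (Integrable.mul_prod (integrable_decay_fn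
          (c := ε / 2 * (2 * a0 * c2b)) (mul_nonneg (by positivity)
            (mul_nonneg (mul_nonneg (by norm_num) ha0nn) hc2nn)))
          ((integrableOn_const measure_Ioc_lt_top.ne :
            IntegrableOn (fun _ : ℝ => (1:ℝ)) (Set.Ioc z y) volume)))
        ?_ (ae_of_all _ fun p => ?_)
      · refine Continuous.aestronglyMeasurable ?_
        refine ((continuous_phiF ε x₀).comp continuous_fst).mul
          ((continuous_const.mul hWc).mul ?_)
        exact hVxc.comp (continuous_fst.prodMk continuous_snd)
      · rw [Function.uncurry_apply_pair, Real.norm_eq_abs, mul_one]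
        have h3 : |2 * w p.1 p.2| ≤ 2 * a0 := by
          rw [abs_mul, abs_two]
          simpa using mul_le_mul_of_nonneg_left (hw0 p.1 p.2) (by norm_num : (0:ℝ) ≤ 2)
        exact (mul_abs_le (abs_phiF_le hε _)
          (mul_abs_le h3 (hvx2 p.1 p.2))).trans (le_of_eq (by ring))
    have hswap := integral_integral_swap
      (f := fun x t => WQE.phiF ε (x + x₀) * (2 * w x t * fderiv ℝ (fun p : ℝ × ℝ => v p.1 p.2) (x, t) ((1:ℝ), (0:ℝ)))) hint
    have hinner : ∀ t : ℝ,
        |∫ x : ℝ, WQE.phiF ε (x + x₀) * (2 * w x t * fderiv ℝ (fun p : ℝ × ℝ => v p.1 p.2) (x, t) ((1:ℝ), (0:ℝ)))| ≤ (1 + 2 * ε) * (∫ x : ℝ, (fderiv ℝ (fun p : ℝ × ℝ => w p.1 p.2) (x, t) ((1:ℝ), (0:ℝ)) ^ 2 + v x t ^ 2 + w x t ^ 2) * WQE.phiF ε (x + x₀)) := by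
      intro t
      exact ibp_bound (x₀ := x₀) hε (f := fun x => w x t) (f' := fun x => fderiv ℝ (fun p : ℝ × ℝ => w p.1 p.2) (x, t) ((1:ℝ), (0:ℝ)))
        (g := fun x => v x t) (g' := fun x => fderiv ℝ (fun p : ℝ × ℝ => v p.1 p.2) (x, t) ((1:ℝ), (0:ℝ)))
        (fun x => hwd x t) (fun x => hvd x t) (hwc1 t) (hwxc1 t) (hvc1 t) (hvxc1 t)
        (fun x => hw0 x t) (fun x => hw2 x t) (fun x => hwx0 x t) (fun x => hwx2 x t)
        (fun x => hv0 x t) (fun x => hv2 x t) (fun x => hvx2 x t)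
    have hInnerInt : Integrable
        (fun t => ∫ x : ℝ, WQE.phiF ε (x + x₀) * (2 * w x t * fderiv ℝ (fun p : ℝ × ℝ => v p.1 p.2) (x, t) ((1:ℝ), (0:ℝ))))
        (volume.restrict (Set.Ioc z y)) := hint.integral_prod_right
    calc |(∫ x : ℝ, WQE.phiF ε (x + x₀) * w x y ^ 2) - (∫ x : ℝ, WQE.phiF ε (x + x₀) * w x z ^ 2)|
        = |∫ t in Set.Ioc z y, ∫ x : ℝ, WQE.phiF ε (x + x₀) * (2 * w x t * fderiv ℝ (fun p : ℝ × ℝ => v p.1 p.2) (x, t) ((1:ℝ), (0:ℝ)))| := by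
          rw [hrep, hswap]
      _ ≤ ∫ t in Set.Ioc z y, |∫ x : ℝ, WQE.phiF ε (x + x₀) * (2 * w x t * fderiv ℝ (fun p : ℝ × ℝ => v p.1 p.2) (x, t) ((1:ℝ), (0:ℝ)))| := by
          simpa only [Real.norm_eq_abs] using norm_integral_le_integral_norm
            (μ := volume.restrict (Set.Ioc z y))
            (fun t => ∫ x : ℝ, WQE.phiF ε (x + x₀) * (2 * w x t * fderiv ℝ (fun p : ℝ × ℝ => v p.1 p.2) (x, t) ((1:ℝ), (0:ℝ))))
      _ ≤ ∫ t in Set.Ioc z y, (1 + 2 * ε) * (∫ x : ℝ, (fderiv ℝ (fun p : ℝ × ℝ => w p.1 p.2) (x, t) ((1:ℝ), (0:ℝ)) ^ 2 + v x t ^ 2 + w x t ^ 2) * WQE.phiF ε (x + x₀)) := by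
          refine integral_mono hInnerInt.abs ((hhc.integrableOn_Ioc).const_mul _)
            fun t => hinner t
      _ ≤ ∫ t in Set.Ioc (0:ℝ) (2 * π), (1 + 2 * ε) * (∫ x : ℝ, (fderiv ℝ (fun p : ℝ × ℝ => w p.1 p.2) (x, t) ((1:ℝ), (0:ℝ)) ^ 2 + v x t ^ 2 + w x t ^ 2) * WQE.phiF ε (x + x₀)) := by
          refine setIntegral_mono_set (hhIoc.const_mul _)
            (ae_of_all _ fun t => mul_nonneg h1ε.le (hhnn t))
            (HasSubset.Subset.eventuallyLE (Set.Ioc_subset_Ioc hz.1.le hy.2))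
      _ = (1 + 2 * ε) * (∫ t in Set.Ioc (0:ℝ) (2 * π), (∫ x : ℝ, (fderiv ℝ (fun p : ℝ × ℝ => w p.1 p.2) (x, t) ((1:ℝ), (0:ℝ)) ^ 2 + v x t ^ 2 + w x t ^ 2) * WQE.phiF ε (x + x₀))) := integral_const_mul _ _
  -- m is bounded by the average plus the variation
  have hKK : ∀ y ∈ Set.Ioc (0:ℝ) (2 * π), (∫ x : ℝ, WQE.phiF ε (x + x₀) * w x y ^ 2) ≤ 1 / (2 * π) * (∫ t in Set.Ioc (0:ℝ) (2 * π), (∫ x : ℝ, (fderiv ℝ (fun p : ℝ × ℝ => w p.1 p.2) (x, t) ((1:ℝ), (0:ℝ)) ^ 2 + v x t ^ 2 + w x t ^ 2) * WQE.phiF ε (x + x₀))) + (1 + 2 * ε) * (∫ t in Set.Ioc (0:ℝ) (2 * π), (∫ x : ℝ, (fderiv ℝ (fun p : ℝ × ℝ => w p.1 p.2) (x, t) ((1:ℝ), (0:ℝ)) ^ 2 + v x t ^ 2 + w x t ^ 2) * WQE.phiF ε (x + x₀))) := by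
    intro y hy
    have hall : ∀ z ∈ Set.Ioc (0:ℝ) (2 * π), (∫ x : ℝ, WQE.phiF ε (x + x₀) * w x y ^ 2) ≤ (∫ x : ℝ, WQE.phiF ε (x + x₀) * w x z ^ 2) + (1 + 2 * ε) * (∫ t in Set.Ioc (0:ℝ) (2 * π), (∫ x : ℝ, (fderiv ℝ (fun p : ℝ × ℝ => w p.1 p.2) (x, t) ((1:ℝ), (0:ℝ)) ^ 2 + v x t ^ 2 + w x t ^ 2) * WQE.phiF ε (x + x₀))) := by
      intro z hz
      rcases le_total z y with h | h
      · have h1 := (abs_le.mp (hdiff z hz y hy h)).2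
        linarith
      · have h1 := (abs_le.mp (hdiff y hy z hz h)).1
        linarith
    have hconst : IntegrableOn (fun _ : ℝ => (∫ x : ℝ, WQE.phiF ε (x + x₀) * w x y ^ 2)) (Set.Ioc (0:ℝ) (2 * π)) :=
      integrableOn_const measure_Ioc_lt_top.ne
    have hconst2 : IntegrableOn (fun _ : ℝ => (1 + 2 * ε) * (∫ t in Set.Ioc (0:ℝ) (2 * π), (∫ x : ℝ, (fderiv ℝ (fun p : ℝ × ℝ => w p.1 p.2) (x, t) ((1:ℝ), (0:ℝ)) ^ 2 + v x t ^ 2 + w x t ^ 2) * WQE.phiF ε (x + x₀)))) (Set.Ioc (0:ℝ) (2 * π)) :=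
      integrableOn_const measure_Ioc_lt_top.ne
    have hInt1 : ∫ _z in Set.Ioc (0:ℝ) (2 * π), (∫ x : ℝ, WQE.phiF ε (x + x₀) * w x y ^ 2)
        ≤ ∫ z in Set.Ioc (0:ℝ) (2 * π), ((∫ x : ℝ, WQE.phiF ε (x + x₀) * w x z ^ 2) + (1 + 2 * ε) * (∫ t in Set.Ioc (0:ℝ) (2 * π), (∫ x : ℝ, (fderiv ℝ (fun p : ℝ × ℝ => w p.1 p.2) (x, t) ((1:ℝ), (0:ℝ)) ^ 2 + v x t ^ 2 + w x t ^ 2) * WQE.phiF ε (x + x₀)))) :=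
      setIntegral_mono_on hconst (hmIoc.add hconst2) measurableSet_Ioc fun z hz => hall z hz
    have evol : (volume (Set.Ioc (0:ℝ) (2 * π))).toReal = 2 * π := by
      rw [Real.volume_Ioc, sub_zero, ENNReal.toReal_ofReal (by positivity)]
    have e1 : ∫ _z in Set.Ioc (0:ℝ) (2 * π), (∫ x : ℝ, WQE.phiF ε (x + x₀) * w x y ^ 2) = (2 * π) * (∫ x : ℝ, WQE.phiF ε (x + x₀) * w x y ^ 2) := by
      rw [setIntegral_const, smul_eq_mul, measureReal_def, evol]
    have e2 : ∫ z in Set.Ioc (0:ℝ) (2 * π), ((∫ x : ℝ, WQE.phiF ε (x + x₀) * w x z ^ 2) + (1 + 2 * ε) * (∫ t in Set.Ioc (0:ℝ) (2 * π), (∫ x : ℝ, (fderiv ℝ (fun p : ℝ × ℝ => w p.1 p.2) (x, t) ((1:ℝ), (0:ℝ)) ^ 2 + v x t ^ 2 + w x t ^ 2) * WQE.phiF ε (x + x₀))))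
        = (∫ z in Set.Ioc (0:ℝ) (2 * π), (∫ x : ℝ, WQE.phiF ε (x + x₀) * w x z ^ 2)) + (2 * π) * ((1 + 2 * ε) * (∫ t in Set.Ioc (0:ℝ) (2 * π), (∫ x : ℝ, (fderiv ℝ (fun p : ℝ × ℝ => w p.1 p.2) (x, t) ((1:ℝ), (0:ℝ)) ^ 2 + v x t ^ 2 + w x t ^ 2) * WQE.phiF ε (x + x₀)))) := by
      rw [integral_add hmIoc hconst2, setIntegral_const, smul_eq_mul, measureReal_def, evol]
    have e3 : ∫ z in Set.Ioc (0:ℝ) (2 * π), (∫ x : ℝ, WQE.phiF ε (x + x₀) * w x z ^ 2) ≤ (∫ t in Set.Ioc (0:ℝ) (2 * π), (∫ x : ℝ, (fderiv ℝ (fun p : ℝ × ℝ => w p.1 p.2) (x, t) ((1:ℝ), (0:ℝ)) ^ 2 + v x t ^ 2 + w x t ^ 2) * WQE.phiF ε (x + x₀))) :=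
      setIntegral_mono_on hmIoc hhIoc measurableSet_Ioc fun z _ => hmhh z
    have h2π : (0:ℝ) < 2 * π := by positivity
    have hfin : (2 * π) * (∫ x : ℝ, WQE.phiF ε (x + x₀) * w x y ^ 2) ≤ (∫ t in Set.Ioc (0:ℝ) (2 * π), (∫ x : ℝ, (fderiv ℝ (fun p : ℝ × ℝ => w p.1 p.2) (x, t) ((1:ℝ), (0:ℝ)) ^ 2 + v x t ^ 2 + w x t ^ 2) * WQE.phiF ε (x + x₀))) + (2 * π) * ((1 + 2 * ε) * (∫ t in Set.Ioc (0:ℝ) (2 * π), (∫ x : ℝ, (fderiv ℝ (fun p : ℝ × ℝ => w p.1 p.2) (x, t) ((1:ℝ), (0:ℝ)) ^ 2 + v x t ^ 2 + w x t ^ 2) * WQE.phiF ε (x + x₀)))) := by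
      rw [← e1]
      refine hInt1.trans ?_
      rw [e2]
      linarith
    have heq : (2 * π) * (1 / (2 * π) * (∫ t in Set.Ioc (0:ℝ) (2 * π), (∫ x : ℝ, (fderiv ℝ (fun p : ℝ × ℝ => w p.1 p.2) (x, t) ((1:ℝ), (0:ℝ)) ^ 2 + v x t ^ 2 + w x t ^ 2) * WQE.phiF ε (x + x₀))) + (1 + 2 * ε) * (∫ t in Set.Ioc (0:ℝ) (2 * π), (∫ x : ℝ, (fderiv ℝ (fun p : ℝ × ℝ => w p.1 p.2) (x, t) ((1:ℝ), (0:ℝ)) ^ 2 + v x t ^ 2 + w x t ^ 2) * WQE.phiF ε (x + x₀))))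
        = (∫ t in Set.Ioc (0:ℝ) (2 * π), (∫ x : ℝ, (fderiv ℝ (fun p : ℝ × ℝ => w p.1 p.2) (x, t) ((1:ℝ), (0:ℝ)) ^ 2 + v x t ^ 2 + w x t ^ 2) * WQE.phiF ε (x + x₀))) + (2 * π) * ((1 + 2 * ε) * (∫ t in Set.Ioc (0:ℝ) (2 * π), (∫ x : ℝ, (fderiv ℝ (fun p : ℝ × ℝ => w p.1 p.2) (x, t) ((1:ℝ), (0:ℝ)) ^ 2 + v x t ^ 2 + w x t ^ 2) * WQE.phiF ε (x + x₀)))) := by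
      field_simp
    refine le_of_mul_le_mul_left ?_ h2π
    rw [heq]
    exact hfin
  -- final comparison
  have hfinal : (∫ y in Set.Ioc (0:ℝ) (2 * π), (∫ x : ℝ, WQE.phiF ε (x + x₀) ^ 2 * w x y ^ 4))
      ≤ ((1 + 2 * ε) * (1 / (2 * π) + (1 + 2 * ε))) * (∫ t in Set.Ioc (0:ℝ) (2 * π), (∫ x : ℝ, (fderiv ℝ (fun p : ℝ × ℝ => w p.1 p.2) (x, t) ((1:ℝ), (0:ℝ)) ^ 2 + v x t ^ 2 + w x t ^ 2) * WQE.phiF ε (x + x₀))) ^ 2 := by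
    have hKKnn : 0 ≤ 1 / (2 * π) * (∫ t in Set.Ioc (0:ℝ) (2 * π), (∫ x : ℝ, (fderiv ℝ (fun p : ℝ × ℝ => w p.1 p.2) (x, t) ((1:ℝ), (0:ℝ)) ^ 2 + v x t ^ 2 + w x t ^ 2) * WQE.phiF ε (x + x₀))) + (1 + 2 * ε) * (∫ t in Set.Ioc (0:ℝ) (2 * π), (∫ x : ℝ, (fderiv ℝ (fun p : ℝ × ℝ => w p.1 p.2) (x, t) ((1:ℝ), (0:ℝ)) ^ 2 + v x t ^ 2 + w x t ^ 2) * WQE.phiF ε (x + x₀))) :=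
      add_nonneg (mul_nonneg (by positivity) hRnn) (mul_nonneg h1ε.le hRnn)
    calc (∫ y in Set.Ioc (0:ℝ) (2 * π), (∫ x : ℝ, WQE.phiF ε (x + x₀) ^ 2 * w x y ^ 4))
        ≤ ∫ y in Set.Ioc (0:ℝ) (2 * π),
            ((1 + 2 * ε) * (1 / (2 * π) * (∫ t in Set.Ioc (0:ℝ) (2 * π), (∫ x : ℝ, (fderiv ℝ (fun p : ℝ × ℝ => w p.1 p.2) (x, t) ((1:ℝ), (0:ℝ)) ^ 2 + v x t ^ 2 + w x t ^ 2) * WQE.phiF ε (x + x₀))) + (1 + 2 * ε) * (∫ t in Set.Ioc (0:ℝ) (2 * π), (∫ x : ℝ, (fderiv ℝ (fun p : ℝ × ℝ => w p.1 p.2) (x, t) ((1:ℝ), (0:ℝ)) ^ 2 + v x t ^ 2 + w x t ^ 2) * WQE.phiF ε (x + x₀))))) * (∫ x : ℝ, (fderiv ℝ (fun p : ℝ × ℝ => w p.1 p.2) (x, y) ((1:ℝ), (0:ℝ)) ^ 2 + v x y ^ 2 + w x y ^ 2) * WQE.phiF ε (x + x₀)) := by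
          refine setIntegral_mono_on hF4Ioc ((hhIoc.const_mul _)) measurableSet_Ioc
            fun y hy => ?_
          refine (hstep1 y).trans ?_
          calc (1 + 2 * ε) * (∫ x : ℝ, (fderiv ℝ (fun p : ℝ × ℝ => w p.1 p.2) (x, y) ((1:ℝ), (0:ℝ)) ^ 2 + v x y ^ 2 + w x y ^ 2) * WQE.phiF ε (x + x₀)) * (∫ x : ℝ, WQE.phiF ε (x + x₀) * w x y ^ 2)
              ≤ (1 + 2 * ε) * (∫ x : ℝ, (fderiv ℝ (fun p : ℝ × ℝ => w p.1 p.2) (x, y) ((1:ℝ), (0:ℝ)) ^ 2 + v x y ^ 2 + w x y ^ 2) * WQE.phiF ε (x + x₀)) * (1 / (2 * π) * (∫ t in Set.Ioc (0:ℝ) (2 * π), (∫ x : ℝ, (fderiv ℝ (fun p : ℝ × ℝ => w p.1 p.2) (x, t) ((1:ℝ), (0:ℝ)) ^ 2 + v x t ^ 2 + w x t ^ 2) * WQE.phiF ε (x + x₀))) + (1 + 2 * ε) * (∫ t in Set.Ioc (0:ℝ) (2 * π), (∫ x : ℝ, (fderiv ℝ (fun p : ℝ × ℝ => w p.1 p.2)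 (x, t) ((1:ℝ), (0:ℝ)) ^ 2 + v x t ^ 2 + w x t ^ 2) * WQE.phiF ε (x + x₀)))) :=
                mul_le_mul_of_nonneg_left (hKK y hy) (mul_nonneg h1ε.le (hhnn y))
            _ = ((1 + 2 * ε) * (1 / (2 * π) * (∫ t in Set.Ioc (0:ℝ) (2 * π), (∫ x : ℝ, (fderiv ℝ (fun p : ℝ × ℝ => w p.1 p.2) (x, t) ((1:ℝ), (0:ℝ)) ^ 2 + v x t ^ 2 + w x t ^ 2) * WQE.phiF ε (x + x₀))) + (1 + 2 * ε) * (∫ t in Set.Ioc (0:ℝ) (2 * π), (∫ x : ℝ, (fderiv ℝ (fun p : ℝ × ℝ => w p.1 p.2) (x, t) ((1:ℝ), (0:ℝ)) ^ 2 + v x t ^ 2 + w x t ^ 2) * WQE.phiF ε (x + x₀))))) * (∫ x : ℝ, (fderiv ℝ (fun p : ℝ × ℝ => w p.1 p.2) (x, y) ((1:ℝ), (0:ℝ)) ^ 2 + v x y ^ 2 + w x y ^ 2) * WQE.phiF ε (x + x₀)) := by ring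
      _ = ((1 + 2 * ε) * (1 / (2 * π) * (∫ t in Set.Ioc (0:ℝ) (2 * π), (∫ x : ℝ, (fderiv ℝ (fun p : ℝ × ℝ => w p.1 p.2) (x, t) ((1:ℝ), (0:ℝ)) ^ 2 + v x t ^ 2 + w x t ^ 2) * WQE.phiF ε (x + x₀))) + (1 + 2 * ε) * (∫ t in Set.Ioc (0:ℝ) (2 * π), (∫ x : ℝ, (fderiv ℝ (fun p : ℝ × ℝ => w p.1 p.2) (x, t) ((1:ℝ), (0:ℝ)) ^ 2 + v x t ^ 2 + w x t ^ 2) * WQE.phiF ε (x + x₀))))) * (∫ t in Set.Ioc (0:ℝ) (2 * π), (∫ x : ℝ, (fderiv ℝ (fun p : ℝ × ℝ => w p.1 p.2) (x, t) ((1:ℝ), (0:ℝ)) ^ 2 + v x t ^ 2 + w x t ^ 2) * WQE.phiF ε (x + x₀))) := integral_const_mul _ _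
      _ = ((1 + 2 * ε) * (1 / (2 * π) + (1 + 2 * ε))) * (∫ t in Set.Ioc (0:ℝ) (2 * π), (∫ x : ℝ, (fderiv ℝ (fun p : ℝ × ℝ => w p.1 p.2) (x, t) ((1:ℝ), (0:ℝ)) ^ 2 + v x t ^ 2 + w x t ^ 2) * WQE.phiF ε (x + x₀))) ^ 2 := by ring
  refine (Real.sqrt_le_sqrt hfinal).trans ?_
  rw [Real.sqrt_mul (by positivity) , Real.sqrt_sq hRnn]
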